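/- Let X ⊆ ℝ^m and Y ⊆ ℝ^n be nonempty compact convex sets, A a q×n and B a q×m real matrix, b ∈ ℝ^q. Let f : ℝ^n × ℝ^m → ℝ ∪ {+∞} be proper convex lower semicontinuous and g : ℝ^n × ℝ^m → ℝ^p have convex lower semicontinuous components, with f and g differentiable on Y × X. Define 𝒬(x) = inf { f(y, x) : y ∈ Y, Ay + Bx = b, g(y, x) ≤ 0 }, the Lagrangian L_x(y, λ, μ) = f(y, x) + λᵀ(Ay + Bx − b) + μᵀ g(y, x), and the dual function θ_x(λ, μ) = inf_{y ∈ Y} L_x(y, λ, μ). Assume the Slater condition (H5): for every x ∈ X there exists y_x (in the relative interior of Y when Y is not polyhedral) with Ay_x + Bx = b and g(y_x, x) < 0 componentwise. Fix x̄ ∈ X and ε ≥ 0; let ŷ be feasible for the problem defining 𝒬(x̄) with f(ŷ, x̄) ≤ 𝒬(x̄) + ε, and let (λ̂, μ̂) with μ̂ ≥ 0 satisfy θ_{x̄}(λ̂, μ̂) ≥ 𝒬(x̄) − ε. Set η = max_{y ∈ Y} ⟨∇_y L_{x̄}(ŷ, λ̂, μ̂), ŷ − y⟩. Then the affine function C(x)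 = L_{x̄}(ŷ, λ̂, μ̂) − η + ⟨∇_x L_{x̄}(ŷ, λ̂, μ̂), x − x̄⟩, where ∇_x L_{x̄}(ŷ, λ̂, μ̂) = ∇_x f(ŷ, x̄) + Bᵀλ̂ + Σ_{i=1}^p μ̂_i ∇_x g_i(ŷ, x̄), satisfies 𝒬(x) ≥ C(x) for every x ∈ X, and 𝒬(x̄) − C(x̄) ≤ ε + η. -/

import Mathlib

open scoped RealInnerProductSpace Matrix
noncomputable section

/-- `ℝ^k` with the Euclidean norm. -/
abbrev E (k : ℕ) := EuclideanSpace ℝ (Fin k)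

/-- Reinterpret a plain vector of `ℝ^k` as an element of Euclidean space. -/
def toE {k : ℕ} (v : Fin k → ℝ) : E k := WithLp.toLp 2 v

/-- Convexity for extended-real-valued functions on a real vector space. -/
def EConvexOn {V : Type*} [AddCommGroup V] [Module ℝ V] (f : V → EReal) : Prop :=
  ∀ x y : V, ∀ t ∈ Set.Ioo (0:ℝ) 1,
    f (t • x + (1 - t) • y) ≤ (t : EReal) * f x + ((1 - t : ℝ) : EReal) * f y

/-- A polyhedral set: a finite intersection of closed half-spaces. -/
def IsPolyhedral {k : ℕ} (s : Set (E k)) : Prop :=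
  ∃ (r : ℕ) (c : Fin r → E k) (d : Fin r → ℝ), s = {x : E k | ∀ i, ⟪c i, x⟫ ≤ d i}

/-- The value function `𝒬(x) = inf { f(y, x) : y ∈ Y, Ay + Bx = b, g(y, x) ≤ 0 }`. -/
def Qvar {n m q p : ℕ} (Y : Set (E n)) (A : Matrix (Fin q) (Fin n) ℝ)
    (B : Matrix (Fin q) (Fin m) ℝ) (b : Fin q → ℝ)
    (f : E n × E m → EReal) (g : Fin p → E n × E m → EReal) (x : E m) : EReal :=
  ⨅ (y : E n) (_ : y ∈ Y) (_ : A.mulVec y + B.mulVec x = b)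
    (_ : ∀ i, g i (y, x) ≤ (0 : EReal)), f (y, x)

/-- The dual function `θ_x(λ, μ) = inf_{y ∈ Y} { f(y,x) + λᵀ(Ay + Bx − b) + μᵀg(y,x) }`. -/
def thetaVar {n m q p : ℕ} (Y : Set (E n)) (A : Matrix (Fin q) (Fin n) ℝ)
    (B : Matrix (Fin q) (Fin m) ℝ) (b : Fin q → ℝ)
    (f : E n × E m → EReal) (g : Fin p → E n × E m → EReal)
    (x : E m) (lam : E q) (mu : E p) : EReal :=
  ⨅ (y : E n) (_ : y ∈ Y),
    (f (y, x) + (((lam : Fin q → ℝ) ⬝ᵥ (A.mulVec y + B.mulVec x - b) : ℝ) : EReal)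
      + ∑ i, (mu i : EReal) * g i (y, x))

/-- The (real-valued) Lagrangian `L_x(y, λ, μ) = f(y,x) + λᵀ(Ay + Bx − b) + μᵀg(y,x)`,
expressed through the real representations `fr`, `gr` of `f`, `g` on `Y × X`. -/
def lagr {n m q p : ℕ} (A : Matrix (Fin q) (Fin n) ℝ)
    (B : Matrix (Fin q) (Fin m) ℝ) (b : Fin q → ℝ)
    (fr : E n × E m → ℝ) (gr : Fin p → E n × E m → ℝ)
    (x : E m) (y : E n) (lam : E q) (mu : E p) : ℝ :=
  fr (y, x) + (lam : Fin q → ℝ) ⬝ᵥ (A.mulVec y + B.mulVec x - b)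
    + ∑ i, mu i * gr i (y, x)

/-!
For fixed multipliers `(λ̂, μ̂)` with `μ̂ ≥ 0`, the Lagrangian `(y, x) ↦ L_x(y, λ̂, μ̂)` is convex on
`Y × X`, so it lies above its tangent plane at `(ŷ, x̄)`. At a feasible `(y, x)` the Lagrangian is
at most `f(y, x)`, and the `y`-part of the tangent term is at least `-η` by the choice of `η`;
taking the infimum over feasible `y` gives `C ≤ 𝒬`. For the gap, weak duality at `ŷ ∈ Y` gives
`𝒬(x̄) - ε ≤ θ_{x̄}(λ̂, μ̂) ≤ L_{x̄}(ŷ, λ̂, μ̂) = C(x̄) + η`.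
-/

theorem EConvexOn.convexOn_of_eqOn {V : Type*} [AddCommGroup V] [Module ℝ V] {S : Set V}
    {h : V → EReal} {hr : V → ℝ} (hc : EConvexOn h) (hS : Convex ℝ S)
    (heq : ∀ z ∈ S, h z = hr z) : ConvexOn ℝ S hr := by
  refine convexOn_iff_forall_pos.mpr ⟨hS, fun u hu v hv a c ha hc' hac => ?_⟩
  obtain rfl : c = 1 - a := by linarith
  have hmem := hS hu hv ha.le hc'.le hac
  have hle := hc u v a ⟨ha, by linarith⟩
  rw [heq _ hmem, heq _ hu, heq _ hv] at hle
  exact_mod_cast hle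

theorem ConvexOn.fun_sum {𝕜 V ι : Type*} [Field 𝕜] [LinearOrder 𝕜] [IsStrictOrderedRing 𝕜]
    [AddCommGroup V] [Module 𝕜 V] {S : Set V} {t : Finset ι} {f : ι → V → 𝕜}
    (hS : Convex 𝕜 S) (hf : ∀ i ∈ t, ConvexOn 𝕜 S (f i)) :
    ConvexOn 𝕜 S (fun z => ∑ i ∈ t, f i z) := by
  classical
  induction t using Finset.induction_on with
  | empty => simpa using convexOn_const 0 hS
  | insert i t hi ih =>
    simp_rw [Finset.sum_insert hi]
    exact (hf i (t.mem_insert_self i)).add (ih fun j hj => hf j (Finset.mem_insert_of_mem hj))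

theorem ConvexOn.add_fderiv_sub_le {F : Type*} [NormedAddCommGroup F] [NormedSpace ℝ F]
    {S : Set F} {h : F → ℝ} {D : F →L[ℝ] ℝ} {z₀ z : F} (hh : ConvexOn ℝ S h)
    (hz₀ : z₀ ∈ S) (hz : z ∈ S) (hd : HasFDerivAt h D z₀) : h z₀ + D (z - z₀) ≤ h z := by
  set ℓ : ℝ →ᵃ[ℝ] F := AffineMap.lineMap z₀ z
  have hℓ₀ : ℓ 0 = z₀ := AffineMap.lineMap_apply_zero z₀ z
  have hℓ₁ : ℓ 1 = z := AffineMap.lineMap_apply_one z₀ z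
  have hline : ConvexOn ℝ (ℓ ⁻¹' S) (h ∘ ℓ) := hh.comp_affineMap ℓ
  have hderiv : HasDerivAt (h ∘ ℓ) (D (z - z₀)) 0 :=
    (hℓ₀ ▸ hd).comp_hasDerivAt (0 : ℝ) AffineMap.hasDerivAt_lineMap
  have hslope := hline.le_slope_of_hasDerivAt (x := 0) (y := 1)
    (by simpa [hℓ₀] using hz₀) (by simpa [hℓ₁] using hz) one_pos hderiv
  rw [slope_def_field, Function.comp_apply, Function.comp_apply, hℓ₀, hℓ₁, sub_zero,
    div_one] at hslope
  linarith

theorem HasFDerivAt.inner_partialGradient_fst {F G : Type*} [NormedAddCommGroup F]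
    [InnerProductSpace ℝ F] [CompleteSpace F] [NormedAddCommGroup G] [NormedSpace ℝ G]
    {h : F × G → ℝ} {D : F × G →L[ℝ] ℝ} {y₀ : F} {x₀ : G} (hD : HasFDerivAt h D (y₀, x₀))
    {g : F} (hg : HasGradientAt (fun y => h (y, x₀)) g y₀) (v : F) : ⟪g, v⟫ = D (v, 0) := by
  have hcomp : HasFDerivAt (fun y => h (y, x₀)) (D.comp (.inl ℝ F G)) y₀ :=
    hD.comp y₀ (hasFDerivAt_prodMk_left y₀ x₀)
  rw [← hg.fderiv_apply, hcomp.fderiv]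
  simp

theorem HasFDerivAt.inner_partialGradient_snd {F G : Type*} [NormedAddCommGroup F]
    [NormedSpace ℝ F] [NormedAddCommGroup G] [InnerProductSpace ℝ G] [CompleteSpace G]
    {h : F × G → ℝ} {D : F × G →L[ℝ] ℝ} {y₀ : F} {x₀ : G} (hD : HasFDerivAt h D (y₀, x₀))
    {g : G} (hg : HasGradientAt (fun x => h (y₀, x)) g x₀) (w : G) : ⟪g, w⟫ = D (0, w) := by
  have hcomp : HasFDerivAt (fun x => h (y₀, x)) (D.comp (.inr ℝ F G)) x₀ :=
    hD.comp x₀ (hasFDerivAt_prodMk_right y₀ x₀)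
  rw [← hg.fderiv_apply, hcomp.fderiv]
  simp

theorem ConvexOn.add_inner_partialGradients_le {F G : Type*} [NormedAddCommGroup F]
    [InnerProductSpace ℝ F] [CompleteSpace F] [NormedAddCommGroup G] [InnerProductSpace ℝ G]
    [CompleteSpace G] {K : Set (F × G)} {h : F × G → ℝ} {y₀ : F} {x₀ : G}
    (hh : ConvexOn ℝ K h) (hd : DifferentiableAt ℝ h (y₀, x₀)) {gy : F} {gx : G}
    (hgy : HasGradientAt (fun y => h (y, x₀)) gy y₀)
    (hgx : HasGradientAt (fun x => h (y₀, x)) gx x₀)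
    (h₀ : (y₀, x₀) ∈ K) ⦃y : F⦄ ⦃x : G⦄ (hyx : (y, x) ∈ K) :
    h (y₀, x₀) + ⟪gy, y - y₀⟫ + ⟪gx, x - x₀⟫ ≤ h (y, x) := by
  have hD := hd.hasFDerivAt
  have hsplit : (y, x) - (y₀, x₀) = (y - y₀, 0) + (0, x - x₀) := by simp
  have := hh.add_fderiv_sub_le h₀ hyx hD
  rwa [hsplit, map_add, ← hD.inner_partialGradient_fst hgy,
    ← hD.inner_partialGradient_snd hgx, ← add_assoc] at this

theorem dotProduct_mulVec_eq_inner {k l : ℕ} (M : Matrix (Fin l) (Fin k) ℝ) (u : Fin l → ℝ)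
    (v : E k) : u ⬝ᵥ M *ᵥ v = ⟪toE (Mᵀ *ᵥ u), v⟫ := by
  rw [EuclideanSpace.inner_eq_star_dotProduct]
  simp [toE, Matrix.dotProduct_mulVec, Matrix.vecMul_transpose, dotProduct_comm]

section Lagrangian

variable {n m q p : ℕ} (A : Matrix (Fin q) (Fin n) ℝ) (B : Matrix (Fin q) (Fin m) ℝ)
  (b : Fin q → ℝ) (fr : E n × E m → ℝ) (gr : Fin p → E n × E m → ℝ) (lam : E q) (mu : E p)

theorem lagr_eq (x : E m) (y : E n) :
    lagr A B b fr gr x y lam mu = fr (y, x)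
      + (⟪toE (Aᵀ *ᵥ lam), y⟫ + ⟪toE (Bᵀ *ᵥ lam), x⟫ - lam ⬝ᵥ b) + ∑ i, mu i * gr i (y, x) := by
  rw [lagr, dotProduct_sub, dotProduct_add, dotProduct_mulVec_eq_inner,
    dotProduct_mulVec_eq_inner]

variable {A B b fr gr lam mu}

theorem convexOn_lagr {K : Set (E n × E m)} (hK : Convex ℝ K) (hf : ConvexOn ℝ K fr)
    (hg : ∀ i, ConvexOn ℝ K (gr i)) (hmu : ∀ i, 0 ≤ mu i) :
    ConvexOn ℝ K (fun z => lagr A B b fr gr z.2 z.1 lam mu) := by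
  have hlin : ConvexOn ℝ K
      (fun z : E n × E m => ⟪toE (Aᵀ *ᵥ lam), z.1⟫ + ⟪toE (Bᵀ *ᵥ lam), z.2⟫ - lam ⬝ᵥ b) := by
    have := ((innerₛₗ ℝ (toE (Aᵀ *ᵥ lam)) ∘ₗ .fst ℝ _ _
      + innerₛₗ ℝ (toE (Bᵀ *ᵥ lam)) ∘ₗ .snd ℝ _ _).convexOn hK).add_const (-(lam ⬝ᵥ b))
    exact this.congr fun z _ => by simp [sub_eq_add_neg]
  simp_rw [lagr_eq]
  exact (hf.add hlin).add (ConvexOn.fun_sum hK fun i _ => (hg i).smul (hmu i))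

theorem differentiableAt_lagr {z : E n × E m} (hf : DifferentiableAt ℝ fr z)
    (hg : ∀ i, DifferentiableAt ℝ (gr i) z) :
    DifferentiableAt ℝ (fun z => lagr A B b fr gr z.2 z.1 lam mu) z := by
  simp_rw [lagr_eq]
  have hlin : DifferentiableAt ℝ (fun z : E n × E m =>
      ⟪toE (Aᵀ *ᵥ lam), z.1⟫ + ⟪toE (Bᵀ *ᵥ lam), z.2⟫ - lam ⬝ᵥ b) z :=
    (((differentiableAt_const _).inner ℝ differentiableAt_fst).add
      ((differentiableAt_const _).inner ℝ differentiableAt_snd)).sub_const _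
  exact (hf.add hlin).add (DifferentiableAt.fun_sum fun i _ => (hg i).const_mul (mu i))

open InnerProductSpace in
theorem hasGradientAt_lagr_snd {y : E n} {x : E m} (hf : DifferentiableAt ℝ fr (y, x))
    (hg : ∀ i, DifferentiableAt ℝ (gr i) (y, x)) :
    HasGradientAt (fun x' => lagr A B b fr gr x' y lam mu)
      (gradient (fun x' => fr (y, x')) x + toE (Bᵀ *ᵥ lam)
        + ∑ i, mu i • gradient (fun x' => gr i (y, x')) x) x := by
  have hpartial : ∀ {h : E n × E m → ℝ}, DifferentiableAt ℝ h (y, x) →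
      HasFDerivAt (fun x' => h (y, x')) (toDual ℝ (E m) (gradient (fun x' => h (y, x')) x)) x :=
    fun hh => hasGradientAt_iff_hasFDerivAt.mp
      (hh.comp x (hasFDerivAt_prodMk_right y x).differentiableAt).hasGradientAt
  simp_rw [lagr_eq, hasGradientAt_iff_hasFDerivAt, map_add, map_sum, map_smulₛₗ,
    RCLike.conj_to_real]
  exact ((hpartial hf).add (((toDual ℝ (E m) _).hasFDerivAt.const_add _).sub_const _)).add
    (HasFDerivAt.fun_sum fun i _ => (hpartial (hg i)).const_mul (mu i))

end Lagrangian

theorem EReal.coe_finsetSum {ι : Type*} (s : Finset ι) (f : ι → ℝ) :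
    ((∑ i ∈ s, f i : ℝ) : EReal) = ∑ i ∈ s, (f i : EReal) :=
  map_sum (⟨⟨Real.toEReal, EReal.coe_zero⟩, EReal.coe_add⟩ : ℝ →+ EReal) f s

section Duality
variable {n m q p : ℕ} {Y : Set (E n)} {A : Matrix (Fin q) (Fin n) ℝ}
  {B : Matrix (Fin q) (Fin m) ℝ} {b : Fin q → ℝ} {f : E n × E m → EReal}
  {g : Fin p → E n × E m → EReal} {fr : E n × E m → ℝ} {gr : Fin p → E n × E m → ℝ}
  {lam : E q} {mu : E p} {x : E m} {y : E n}

theorem lagr_le_of_feasible (hlin : A *ᵥ y + B *ᵥ x = b) (hg : ∀ i, gr i (y, x) ≤ 0)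
    (hmu : ∀ i, 0 ≤ mu i) : lagr A B b fr gr x y lam mu ≤ fr (y, x) := by
  have hsum : ∑ i, mu i * gr i (y, x) ≤ 0 :=
    Finset.sum_nonpos fun i _ => mul_nonpos_of_nonneg_of_nonpos (hmu i) (hg i)
  simp only [lagr, hlin, sub_self, dotProduct_zero, add_zero]
  linarith

theorem thetaVar_le_lagr (hy : y ∈ Y) (hf : f (y, x) = fr (y, x))
    (hg : ∀ i, g i (y, x) = gr i (y, x)) :
    thetaVar Y A B b f g x lam mu ≤ (lagr A B b fr gr x y lam mu : EReal) := by
  refine (iInf₂_le y hy).trans_eq ?_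
  simp only [hf, hg, lagr, EReal.coe_add, EReal.coe_finsetSum, EReal.coe_mul]

theorem le_Qvar {c : EReal}
    (hc : ∀ y ∈ Y, A *ᵥ y + B *ᵥ x = b → (∀ i, g i (y, x) ≤ 0) → c ≤ f (y, x)) :
    c ≤ Qvar Y A B b f g x :=
  le_iInf₂ fun y hy => le_iInf₂ fun hlin hg => hc y hy hlin hg

end Duality

theorem inexact_cut_variable_feasible_set_general
    {n m q p : ℕ} (X : Set (E m)) (Y : Set (E n))
    (hXcv : Convex ℝ X)
    (hYcv : Convex ℝ Y)
    (A : Matrix (Fin q) (Fin n) ℝ) (B : Matrix (Fin q) (Fin m) ℝ) (b : Fin q → ℝ)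
    -- (H1): f proper convex lower semicontinuous
    (f : E n × E m → EReal)
    (hfconv : EConvexOn f)
    -- (H2): each gᵢ convex lower semicontinuous (with values in ℝ ∪ {+∞})
    (g : Fin p → E n × E m → EReal)
    (hgconv : ∀ i, EConvexOn (g i))
    -- f and g are differentiable (real-valued, with differentiable representations) on Y × X
    (fr : E n × E m → ℝ) (gr : Fin p → E n × E m → ℝ)
    (hfr : ∀ pt ∈ Y ×ˢ X, f pt = ((fr pt : ℝ) : EReal))
    (hgr : ∀ i, ∀ pt ∈ Y ×ˢ X, g i pt = ((gr i pt : ℝ) : EReal))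
    (hfrdiff : ∀ pt ∈ Y ×ˢ X, DifferentiableAt ℝ fr pt)
    (hgrdiff : ∀ i, ∀ pt ∈ Y ×ˢ X, DifferentiableAt ℝ (gr i) pt)
    (xb : E m) (hxb : xb ∈ X)
    (ε : ℝ)
    -- ŷ: ε-optimal feasible primal solution at x̄
    (yh : E n) (hyhY : yh ∈ Y)
    -- (λ̂, μ̂): ε-optimal feasible dual solution at x̄
    (lamh : E q) (muh : E p) (hmuh : ∀ i, 0 ≤ muh i)
    (hdualeps : Qvar Y A B b f g xb - (ε : EReal) ≤ thetaVar Y A B b f g xb lamh muh)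
    -- η = max_{y ∈ Y} ⟨∇_y L_{x̄}(ŷ, λ̂, μ̂), ŷ − y⟩
    (η : ℝ)
    (hη : IsGreatest
      ((fun y : E n =>
          ⟪gradient (fun y' => lagr A B b fr gr xb y' lamh muh) yh, yh - y⟫) '' Y) η) :
    (∀ x ∈ X,
      ((lagr A B b fr gr xb yh lamh muh - η
          + ⟪gradient (fun x' => fr (yh, x')) xb + toE (Bᵀ.mulVec lamh)
              + ∑ i, muh i • gradient (fun x' => gr i (yh, x')) xb, x - xb⟫ : ℝ) : EReal)
        ≤ Qvar Y A B b f g x) ∧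
    Qvar Y A B b f g xb ≤
      ((lagr A B b fr gr xb yh lamh muh - η
          + ⟪gradient (fun x' => fr (yh, x')) xb + toE (Bᵀ.mulVec lamh)
              + ∑ i, muh i • gradient (fun x' => gr i (yh, x')) xb, xb - xb⟫
          + (ε + η) : ℝ) : EReal) := by
  have hK : Convex ℝ (Y ×ˢ X) := hYcv.prod hXcv
  have h₀ : (yh, xb) ∈ Y ×ˢ X := ⟨hyhY, hxb⟩
  have hLconv := convexOn_lagr (A := A) (B := B) (b := b) (lam := lamh) hK
    (hfconv.convexOn_of_eqOn hK hfr) (fun i => (hgconv i).convexOn_of_eqOn hK (hgr i)) hmuh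
  have hLdiff := differentiableAt_lagr (A := A) (B := B) (b := b) (lam := lamh) (mu := muh)
    (hfrdiff _ h₀) fun i => hgrdiff i _ h₀
  have hLdiff_fst : DifferentiableAt ℝ (fun y => lagr A B b fr gr xb y lamh muh) yh :=
    hLdiff.comp (f := fun y => (y, xb)) yh (hasFDerivAt_prodMk_left yh xb).differentiableAt
  have hsupport := hLconv.add_inner_partialGradients_le hLdiff hLdiff_fst.hasGradientAt
    (hasGradientAt_lagr_snd (hfrdiff _ h₀) fun i => hgrdiff i _ h₀) h₀
  refine ⟨fun x hx => le_Qvar fun y hy hlin hg => ?_, ?_⟩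
  · have hyx : (y, x) ∈ Y ×ˢ X := ⟨hy, hx⟩
    have hgr_nonpos : ∀ i, gr i (y, x) ≤ 0 := fun i =>
      EReal.coe_nonpos.mp (hgr i _ hyx ▸ hg i)
    have hηy := hη.2 ⟨y, hy, rfl⟩
    dsimp only at hηy
    rw [← neg_sub y yh, inner_neg_right] at hηy
    rw [hfr _ hyx, EReal.coe_le_coe_iff]
    linarith [hsupport hyx, lagr_le_of_feasible (fr := fr) (lam := lamh) hlin hgr_nonpos hmuh]
  · have hθ := hdualeps.trans (thetaVar_le_lagr hyhY (hfr _ h₀) fun i => hgr i _ h₀)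
    rw [EReal.sub_le_iff_le_add (.inl (EReal.coe_ne_bot ε)) (.inl (EReal.coe_ne_top ε))] at hθ
    rw [sub_self, inner_zero_right]
    exact hθ.trans_eq (by norm_cast; ring)

/-- Inexact cut with variable feasible set (Proposition 2.7 of Guigues, ISDDP): given an
`ε`-optimal primal solution `ŷ` and an `ε`-optimal dual solution `(λ̂, μ̂)` at `x̄`, with
`η = max_{y ∈ Y} ⟨∇_y L_{x̄}(ŷ, λ̂, μ̂), ŷ − y⟩`, the affine function
`C(x) = L_{x̄}(ŷ, λ̂, μ̂) − η + ⟨∇_x L_{x̄}(ŷ, λ̂, μ̂), x − x̄⟩` is a cut for `𝒬` at `x̄`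
and `𝒬(x̄) − C(x̄) ≤ ε + η`. -/
theorem inexact_cut_variable_feasible_set
    {n m q p : ℕ} (X : Set (E m)) (Y : Set (E n))
    (hXne : X.Nonempty) (hXcp : IsCompact X) (hXcv : Convex ℝ X)
    (hYne : Y.Nonempty) (hYcp : IsCompact Y) (hYcv : Convex ℝ Y)
    (A : Matrix (Fin q) (Fin n) ℝ) (B : Matrix (Fin q) (Fin m) ℝ) (b : Fin q → ℝ)
    -- (H1): f proper convex lower semicontinuous
    (f : E n × E m → EReal)
    (hfbot : ∀ pt, f pt ≠ ⊥) (hfproper : ∃ pt, f pt ≠ ⊤)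
    (hfconv : EConvexOn f) (hflsc : LowerSemicontinuous f)
    -- (H2): each gᵢ convex lower semicontinuous (with values in ℝ ∪ {+∞})
    (g : Fin p → E n × E m → EReal)
    (hgbot : ∀ i pt, g i pt ≠ ⊥)
    (hgconv : ∀ i, EConvexOn (g i)) (hglsc : ∀ i, LowerSemicontinuous (g i))
    -- f and g are differentiable (real-valued, with differentiable representations) on Y × X
    (fr : E n × E m → ℝ) (gr : Fin p → E n × E m → ℝ)
    (hfr : ∀ pt ∈ Y ×ˢ X, f pt = ((fr pt : ℝ) : EReal))
    (hgr : ∀ i, ∀ pt ∈ Y ×ˢ X, g i pt = ((gr i pt : ℝ) : EReal))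
    (hfrdiff : ∀ pt ∈ Y ×ˢ X, DifferentiableAt ℝ fr pt)
    (hgrdiff : ∀ i, ∀ pt ∈ Y ×ˢ X, DifferentiableAt ℝ (gr i) pt)
    -- (H5): Slater-type constraint qualification
    (hslater : ∀ x ∈ X, ∃ y ∈ Y, (¬ IsPolyhedral Y → y ∈ intrinsicInterior ℝ Y) ∧
      A.mulVec y + B.mulVec x = b ∧ ∀ i, g i (y, x) < (0 : EReal))
    (xb : E m) (hxb : xb ∈ X)
    (ε : ℝ) (hε : 0 ≤ ε)
    -- ŷ: ε-optimal feasible primal solution at x̄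
    (yh : E n) (hyhY : yh ∈ Y) (hyhlin : A.mulVec yh + B.mulVec xb = b)
    (hyhg : ∀ i, g i (yh, xb) ≤ (0 : EReal))
    (hyheps : ((fr (yh, xb) : ℝ) : EReal) ≤ Qvar Y A B b f g xb + (ε : EReal))
    -- (λ̂, μ̂): ε-optimal feasible dual solution at x̄
    (lamh : E q) (muh : E p) (hmuh : ∀ i, 0 ≤ muh i)
    (hdualeps : Qvar Y A B b f g xb - (ε : EReal) ≤ thetaVar Y A B b f g xb lamh muh)
    -- η = max_{y ∈ Y} ⟨∇_y L_{x̄}(ŷ, λ̂, μ̂), ŷ − y⟩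
    (η : ℝ)
    (hη : IsGreatest
      ((fun y : E n =>
          ⟪gradient (fun y' => lagr A B b fr gr xb y' lamh muh) yh, yh - y⟫) '' Y) η) :
    (∀ x ∈ X,
      ((lagr A B b fr gr xb yh lamh muh - η
          + ⟪gradient (fun x' => fr (yh, x')) xb + toE (Bᵀ.mulVec lamh)
              + ∑ i, muh i • gradient (fun x' => gr i (yh, x')) xb, x - xb⟫ : ℝ) : EReal)
        ≤ Qvar Y A B b f g x) ∧
    Qvar Y A B b f g xb ≤
      ((lagr A B b fr gr xb yh lamh muh - η
          + ⟪gradient (fun x' => fr (yh, x')) xb + toE (Bᵀ.mulVec lamh)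
              + ∑ i, muh i • gradient (fun x' => gr i (yh, x')) xb, xb - xb⟫
          + (ε + η) : ℝ) : EReal) :=
  inexact_cut_variable_feasible_set_general X Y hXcv hYcv A B b f hfconv g hgconv fr gr hfr hgr
    hfrdiff hgrdiff xb hxb ε yh hyhY lamh muh hmuh hdualeps η hη
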